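/- Let R be an n × n^{m−1} column-stochastic matrix, v a stochastic vector, α < 1/(m−1), γ ≥ 0, and let x be the unique stochastic solution of the multilinear PageRank equation. The shifted fixed-point iteration x^{(k+1)} = (α/(1+γ)) R (x^{(k)} ⊗ ⋯ ⊗ x^{(k)}) + ((1−α)/(1+γ)) v + (γ/(1+γ)) x^{(k)}, started from a stochastic x^{(0)}, satisfies ‖x^{(k)} − x‖₁ ≤ ((α(m−1) + γ)/(1+γ))^k ‖x^{(0)} − x‖₁. -/

import Mathlib

open Finset Matrix

def StochV {α : Type*} [Fintype α] (x : α → ℝ) : Prop :=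
  (∀ i, 0 ≤ x i) ∧ ∑ i, x i = 1

def norm1 {α : Type*} [Fintype α] (x : α → ℝ) : ℝ := ∑ i, |x i|

def kron {α β : Type*} (a : α → ℝ) (b : β → ℝ) : α × β → ℝ := fun p => a p.1 * b p.2

def kpow {n : ℕ} (x : Fin n → ℝ) (k : ℕ) : (Fin k → Fin n) → ℝ := fun f => ∏ i, x (f i)

def ColStoch {α β : Type*} [Fintype α] (R : Matrix α β ℝ) : Prop :=
  (∀ i j, 0 ≤ R i j) ∧ ∀ j, ∑ i, R i j = 1

/-!
The shifted map is `1/(1+γ)` times the PageRank map `y ↦ α R y^{⊗(m-1)} + (1-α) v` plus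
`γ/(1+γ)` times the identity, and it fixes `x`. On stochastic vectors the PageRank map is
`α(m-1)`-Lipschitz for `‖·‖₁`: a column-stochastic `R` does not increase `‖·‖₁`, and writing
`x ⊗ a - y ⊗ b = x ⊗ (a - b) + (x - y) ⊗ b` shows inductively that
`‖x^{⊗k} - y^{⊗k}‖₁ ≤ k ‖x - y‖₁`. Hence each step contracts the distance to `x` by
`(α(m-1) + γ)/(1+γ)`.
-/

lemma kron_sub_kron {α β : Type*} (a c : α → ℝ) (b d : β → ℝ) :
    kron a b - kron c d = kron a (b - d) + kron (a - c) d := by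
  ext p
  simp only [kron, Pi.sub_apply, Pi.add_apply]
  ring

section Norm1

variable {α β : Type*} [Fintype α] [Fintype β]

lemma norm1_add_le (a b : α → ℝ) : norm1 (a + b) ≤ norm1 a + norm1 b := by
  unfold norm1
  rw [← Finset.sum_add_distrib]
  exact Finset.sum_le_sum fun i _ => abs_add_le (a i) (b i)

lemma norm1_smul (c : ℝ) (a : α → ℝ) : norm1 (c • a) = |c| * norm1 a := by
  simp only [norm1, Pi.smul_apply, smul_eq_mul, abs_mul, Finset.mul_sum]

lemma norm1_comp_equiv (e : β ≃ α) (a : α → ℝ) : norm1 (a ∘ e) = norm1 a :=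
  Fintype.sum_equiv e _ _ fun _ => rfl

lemma norm1_kron (a : α → ℝ) (b : β → ℝ) : norm1 (kron a b) = norm1 a * norm1 b := by
  simp only [norm1, kron, abs_mul, Fintype.sum_prod_type, Finset.sum_mul_sum]

lemma StochV.norm1_eq_one {x : α → ℝ} (hx : StochV x) : norm1 x = 1 := by
  rw [norm1, ← hx.2]
  exact Finset.sum_congr rfl fun i _ => abs_of_nonneg (hx.1 i)

lemma ColStoch.sum_mulVec {R : Matrix α β ℝ} (hR : ColStoch R) (z : β → ℝ) :
    ∑ i, (R *ᵥ z) i = ∑ j, z j := by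
  simp only [mulVec, dotProduct]
  rw [Finset.sum_comm]
  exact Finset.sum_congr rfl fun j _ => by rw [← Finset.sum_mul, hR.2 j, one_mul]

lemma ColStoch.norm1_mulVec_le {R : Matrix α β ℝ} (hR : ColStoch R) (z : β → ℝ) :
    norm1 (R *ᵥ z) ≤ norm1 z := by
  calc norm1 (R *ᵥ z) ≤ ∑ i, ∑ j, R i j * |z j| :=
        Finset.sum_le_sum fun i _ => (Finset.abs_sum_le_sum_abs _ _).trans_eq <|
          Finset.sum_congr rfl fun j _ => by rw [abs_mul, abs_of_nonneg (hR.1 i j)]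
    _ = norm1 z := by
        rw [Finset.sum_comm]
        exact Finset.sum_congr rfl fun j _ => by rw [← Finset.sum_mul, hR.2 j, one_mul]

end Norm1

section Kpow

variable {n : ℕ}

lemma sum_kpow (x : Fin n → ℝ) (k : ℕ) : ∑ f, kpow x k f = (∑ i, x i) ^ k := by
  unfold kpow
  rw [← Fintype.piFinset_univ, ← Finset.prod_univ_sum]
  simp

lemma stochV_kpow {x : Fin n → ℝ} (hx : StochV x) (k : ℕ) : StochV (kpow x k) :=
  ⟨fun f => Finset.prod_nonneg fun i _ => hx.1 (f i), by rw [sum_kpow, hx.2, one_pow]⟩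

lemma kpow_succ_comp_consEquiv (x : Fin n → ℝ) (k : ℕ) :
    kpow x (k + 1) ∘ Fin.consEquiv (fun _ => Fin n) = kron x (kpow x k) := by
  ext p
  simp [kpow, kron, Fin.prod_univ_succ]

lemma norm1_kpow_sub_le {x y : Fin n → ℝ} (hx : StochV x) (hy : StochV y) (k : ℕ) :
    norm1 (kpow x k - kpow y k) ≤ k * norm1 (x - y) := by
  induction k with
  | zero => simp [norm1, kpow]
  | succ k ih =>
    calc norm1 (kpow x (k + 1) - kpow y (k + 1))
        = norm1 (kron x (kpow x k) - kron y (kpow y k)) := by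
          rw [← kpow_succ_comp_consEquiv, ← kpow_succ_comp_consEquiv, ← Pi.sub_comp,
            norm1_comp_equiv]
      _ = norm1 (kron x (kpow x k - kpow y k) + kron (x - y) (kpow y k)) := by
          rw [kron_sub_kron]
      _ ≤ norm1 x * norm1 (kpow x k - kpow y k) + norm1 (x - y) * norm1 (kpow y k) := by
          simpa only [norm1_kron] using
            norm1_add_le (kron x (kpow x k - kpow y k)) (kron (x - y) (kpow y k))
      _ = norm1 (kpow x k - kpow y k) + norm1 (x - y) := by
          rw [hx.norm1_eq_one, (stochV_kpow hy k).norm1_eq_one, one_mul, mul_one]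
      _ ≤ (k + 1 : ℕ) * norm1 (x - y) := by
          push_cast
          linarith

end Kpow

section ShiftedIteration

variable {n k : ℕ} {R : Matrix (Fin n) (Fin k → Fin n) ℝ} {v : Fin n → ℝ} {α γ : ℝ}

noncomputable def shiftedStep (R : Matrix (Fin n) (Fin k → Fin n) ℝ) (v : Fin n → ℝ) (α γ : ℝ)
    (y : Fin n → ℝ) : Fin n → ℝ :=
  fun i => (α / (1 + γ)) * R.mulVec (kpow y k) i + ((1 - α) / (1 + γ)) * v i
    + (γ / (1 + γ)) * y i

lemma stochV_shiftedStep (hR : ColStoch R) (hv : StochV v) (hα0 : 0 ≤ α) (hα1 : α ≤ 1)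
    (hγ : 0 ≤ γ) {y : Fin n → ℝ} (hy : StochV y) : StochV (shiftedStep R v α γ y) := by
  have hγ1 : 0 < 1 + γ := by linarith
  have h1α : 0 ≤ 1 - α := by linarith
  refine ⟨fun i => ?_, ?_⟩
  · have hRy : 0 ≤ R.mulVec (kpow y k) i :=
      Finset.sum_nonneg fun j _ => mul_nonneg (hR.1 i j) ((stochV_kpow hy k).1 j)
    have hvi := hv.1 i
    have hyi := hy.1 i
    unfold shiftedStep
    positivity
  · simp only [shiftedStep, Finset.sum_add_distrib, ← Finset.mul_sum, hR.sum_mulVec,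
      (stochV_kpow hy k).2, hv.2, hy.2]
    field_simp
    ring

lemma shiftedStep_sub (y x : Fin n → ℝ) :
    shiftedStep R v α γ y - shiftedStep R v α γ x
      = (α / (1 + γ)) • R *ᵥ (kpow y k - kpow x k) + (γ / (1 + γ)) • (y - x) := by
  ext i
  simp only [shiftedStep, mulVec_sub, Pi.sub_apply, Pi.add_apply, Pi.smul_apply, smul_eq_mul]
  ring

lemma shiftedStep_eq_self (hγ : 0 ≤ γ) {x : Fin n → ℝ}
    (hx : x = fun i => α * R.mulVec (kpow x k) i + (1 - α) * v i) :
    shiftedStep R v α γ x = x := by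
  ext i
  have hxi := congrFun hx i
  have hγ1 : 1 + γ ≠ 0 := by linarith
  simp only [shiftedStep]
  field_simp
  linear_combination -hxi

lemma norm1_shiftedStep_sub_le (hR : ColStoch R) (hα0 : 0 ≤ α) (hγ : 0 ≤ γ)
    {x y : Fin n → ℝ} (hx : StochV x) (hy : StochV y) :
    norm1 (shiftedStep R v α γ y - shiftedStep R v α γ x)
      ≤ (α * k + γ) / (1 + γ) * norm1 (y - x) := by
  have hγ1 : 0 < 1 + γ := by linarith
  calc norm1 (shiftedStep R v α γ y - shiftedStep R v α γ x)
      ≤ α / (1 + γ) * norm1 (R *ᵥ (kpow y k - kpow x k)) + γ / (1 + γ) * norm1 (y - x) := by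
        rw [shiftedStep_sub]
        refine (norm1_add_le _ _).trans_eq ?_
        rw [norm1_smul, norm1_smul, abs_of_nonneg (by positivity),
          abs_of_nonneg (by positivity)]
    _ ≤ α / (1 + γ) * (k * norm1 (y - x)) + γ / (1 + γ) * norm1 (y - x) := by
        gcongr
        exact (hR.norm1_mulVec_le _).trans (norm1_kpow_sub_le hy hx k)
    _ = (α * k + γ) / (1 + γ) * norm1 (y - x) := by ring

end ShiftedIteration

theorem stmt8 {n m : ℕ} (hm : 2 ≤ m)
    (R : Matrix (Fin n) (Fin (m - 1) → Fin n) ℝ) (hR : ColStoch R)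
    (v : Fin n → ℝ) (hv : StochV v)
    (α : ℝ) (hα0 : 0 ≤ α) (hα : α < 1 / ((m : ℝ) - 1))
    (γ : ℝ) (hγ : 0 ≤ γ)
    (x : Fin n → ℝ) (hx : StochV x)
    (hxe : x = fun i => α * R.mulVec (kpow x (m - 1)) i + (1 - α) * v i)
    (X : ℕ → (Fin n → ℝ)) (hX0 : StochV (X 0))
    (hrec : ∀ k, X (k + 1) = fun i =>
      (α / (1 + γ)) * R.mulVec (kpow (X k) (m - 1)) i
        + ((1 - α) / (1 + γ)) * v i + (γ / (1 + γ)) * X k i) :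
    ∀ k, norm1 (X k - x) ≤ ((α * ((m : ℝ) - 1) + γ) / (1 + γ)) ^ k * norm1 (X 0 - x) := by
  have hm1 : ((m - 1 : ℕ) : ℝ) = (m : ℝ) - 1 := by
    rw [Nat.cast_sub (by omega), Nat.cast_one]
  have hm1_pos : (1 : ℝ) ≤ (m : ℝ) - 1 := by
    rw [← hm1]
    exact_mod_cast Nat.le_sub_of_add_le hm
  have hα1 : α ≤ 1 := hα.le.trans ((div_le_one (by linarith)).2 hm1_pos)
  have hstoch : ∀ k, StochV (X k) := by
    intro k
    induction k with
    | zero => exact hX0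
    | succ k ih => rw [hrec k]; exact stochV_shiftedStep hR hv hα0 hα1 hγ ih
  have hfix : shiftedStep R v α γ x = x := shiftedStep_eq_self hγ hxe
  intro k
  refine le_geom (u := fun k => norm1 (X k - x)) (by positivity) k fun j _ => ?_
  have hnext : shiftedStep R v α γ (X j) = X (j + 1) := (hrec j).symm
  have hstep := norm1_shiftedStep_sub_le (v := v) hR hα0 hγ hx (hstoch j)
  rwa [hfix, hnext, hm1] at hstep
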